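/- Let $I \subseteq R = k[x_1,\ldots,x_n]$ be a monomial ideal and $\omega_R = R(-\mathbf{e}_{[n]})$. For each $F \subseteq [n]$, let $\mathcal{M}^i_F$ be a multigraded $k$-basis of $\bigoplus_{\mathbf{a} \in \mathbb{N}^n,\ \mathrm{supp}(\mathbf{a}) \cap F = \varnothing} \mathrm{Ext}^i_R(R/I,\omega_R)_{\mathbf{e}_F - \mathbf{a}}$, and set $\mathcal{S}_i = \{(m, \{x_l : l \in F\}) : F \subseteq [n],\ m \in \mathcal{M}^i_F\}$. Then $\mathcal{S}_i$ is a Stanley decomposition of $\mathrm{Ext}^i_R(R/I,\omega_R)$, i.e., $\mathrm{Ext}^i_R(R/I,\omega_R) = \bigoplus_{(m,G) \in \mathcal{S}_i} k[G]m$ as $k$-vector spaces, with each $k[G]m$ a Stanley space. -/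

import Mathlib

/-!
Common definitions: `ℤⁿ`-graded modules over `R = k[x_1, …, x_n]`, Stanley
decompositions, the Čech complex on `x_1, …, x_n` (computing local cohomology
`H^i_𝔪` and, via the standard characterization, Castelnuovo–Mumford regularity),
and `Ext^i_R(R/I, ω_R)` for a monomial ideal `I`, computed with its natural
`ℤⁿ`-grading from the Taylor complex, which is a graded free resolution of `R/I`
on a chosen set of monomial generators of `I`.
-/

open MvPolynomial

namespace Paper

variable {k : Type} [Field k] {n : ℕ}

/-- The unit vector `e j` in `ℤⁿ`. -/
def eZ (n : ℕ) (j : Fin n) : Fin n → ℤ := fun i => if i = j then 1 else 0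

section Stanley

variable (k n)
variable (M : Type) [AddCommGroup M] [Module (MvPolynomial (Fin n) k) M]
  [Module k M] [IsScalarTower k (MvPolynomial (Fin n) k) M]

/-- The `k`-subspace `k[G]m` of `M` spanned by all `u • m`, `u` a monomial in the
variables of `G`. -/
def stanleySpan (m : M) (G : Set (Fin n)) : Submodule k M :=
  Submodule.span k
    {x | ∃ u : Fin n →₀ ℕ, ↑u.support ⊆ G ∧ x = (monomial u (1 : k) : MvPolynomial (Fin n) k) • m}

/-- `k[G]m` is a Stanley space: no monomial in the variables of `G` kills `m`. -/
def IsStanleySpace (m : M) (G : Set (Fin n)) : Prop :=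
  ∀ u : Fin n →₀ ℕ, ↑u.support ⊆ G → (monomial u (1 : k) : MvPolynomial (Fin n) k) • m ≠ 0

/-- A Stanley decomposition of `M`: finitely many pairs `(m i, G i)` such that each
`k[G i](m i)` is a Stanley space and `M = ⊕ᵢ k[G i](m i)` as `k`-vector spaces. -/
def IsStanleyDecomposition {p : ℕ} (m : Fin p → M) (G : Fin p → Set (Fin n)) : Prop :=
  (∀ i, IsStanleySpace k n M (m i) (G i)) ∧
    DirectSum.IsInternal (fun i : Fin p => stanleySpan k n M (m i) (G i))

end Stanley

section PartialSpan

variable (k n)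

/-- `M⁽ʲ⁾ = R m_1 + ⋯ + R m_j`, the `R`-submodule generated by the first `j`
elements of the family `m`. -/
noncomputable def partialSpan (M : Type) [AddCommGroup M] [Module (MvPolynomial (Fin n) k) M]
    {p : ℕ} (m : Fin p → M) (j : ℕ) : Submodule (MvPolynomial (Fin n) k) M :=
  Submodule.span (MvPolynomial (Fin n) k) (m '' {i : Fin p | (i : ℕ) < j})

end PartialSpan

section Cech

variable (k n)

/-- The multiplicative set generated by the variables `x i`, `i ∈ Λ`. -/
noncomputable def varSubmonoid (Λ : Finset (Fin n)) : Submonoid (MvPolynomial (Fin n) k) :=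
  Submonoid.closure ((fun i => (X i : MvPolynomial (Fin n) k)) '' ↑Λ)

lemma varSubmonoid_mono {Λ Λ' : Finset (Fin n)} (h : Λ ⊆ Λ') :
    varSubmonoid k n Λ ≤ varSubmonoid k n Λ' :=
  Submonoid.closure_mono (Set.image_mono (by exact_mod_cast h))

variable (M : Type) [AddCommGroup M] [Module (MvPolynomial (Fin n) k) M]

/-- The localization `M_{x_Λ}` of `M` inverting the variables in `Λ`. -/
abbrev LocM (Λ : Finset (Fin n)) : Type := LocalizedModule (varSubmonoid k n Λ) M

/-- The canonical map `M_{x_Λ} → M_{x_Λ'}` for `Λ ⊆ Λ'`. -/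
noncomputable def locMap {Λ Λ' : Finset (Fin n)} (h : Λ ⊆ Λ') :
    LocM k n M Λ →ₗ[MvPolynomial (Fin n) k] LocM k n M Λ' :=
  LocalizedModule.lift _ (LocalizedModule.mkLinearMap (varSubmonoid k n Λ') M)
    (fun s => IsLocalizedModule.map_units (LocalizedModule.mkLinearMap (varSubmonoid k n Λ') M)
      ⟨(s : MvPolynomial (Fin n) k), varSubmonoid_mono k n h s.2⟩)

/-- The `j`-th term `Čʲ(M) = ⊕_{|Λ| = j} M_{x_Λ}` of the Čech complex of `M` on the
variables `x 1, …, x n`. -/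
abbrev CechTerm (j : ℕ) : Type :=
  ∀ Λ : {S : Finset (Fin n) // S.card = j}, LocM k n M Λ.1

/-- The Čech differential, an alternating sum of localization maps. -/
noncomputable def cechD (j : ℕ) :
    CechTerm k n M j →ₗ[MvPolynomial (Fin n) k] CechTerm k n M (j + 1) :=
  LinearMap.pi fun Λ' : {S : Finset (Fin n) // S.card = j + 1} =>
    ∑ l ∈ Λ'.1.attach,
      ((-1 : ℤ) ^ ((Λ'.1.filter (fun x => x < l.1)).card)) •
        ((locMap k n M (Finset.erase_subset l.1 Λ'.1)).comp
          (LinearMap.proj (⟨Λ'.1.erase l.1, by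
            rw [Finset.card_erase_of_mem l.2, Λ'.2]; rfl⟩ :
              {S : Finset (Fin n) // S.card = j})))

/-- The coboundaries in cohomological degree `i` of the Čech complex of `M`. -/
noncomputable def cechB : (i : ℕ) → Submodule (MvPolynomial (Fin n) k) (CechTerm k n M i)
  | 0 => ⊥
  | (s + 1) => LinearMap.range (cechD k n M s)

/-- The `j`-th term of the restricted Čech subcomplex `Č_F`: only the direct summands
`M_{x_Λ}` with `F ⊆ Λ` occur (in particular it vanishes for `j < |F|`). -/
def cechSub (F : Finset (Fin n)) (j : ℕ) :
    Submodule (MvPolynomial (Fin n) k) (CechTerm k n M j) where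
  carrier := {c | ∀ Λ, ¬ F ⊆ Λ.1 → c Λ = 0}
  add_mem' := fun h1 h2 Λ h => by
    have := h1 Λ h; have := h2 Λ h
    simp_all
  zero_mem' := fun Λ h => rfl
  smul_mem' := fun r c hc Λ h => by
    have := hc Λ h
    simp_all

/-- The coboundaries of the restricted subcomplex `Č_F` in cohomological degree `i`. -/
noncomputable def cechBF (F : Finset (Fin n)) :
    (i : ℕ) → Submodule (MvPolynomial (Fin n) k) (CechTerm k n M i)
  | 0 => ⊥
  | (s + 1) => Submodule.map (cechD k n M s) (cechSub k n M F s)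

end Cech

section CechGraded

variable (k n)
variable (M : Type) [AddCommGroup M] [Module (MvPolynomial (Fin n) k) M]
variable (gr : (Fin n → ℤ) → Set M)

/-- The multidegree `a` component (for the `ℤⁿ`-grading of `M` given by `gr`) of the
localization `M_{x_Λ}`: generated by fractions `m / xˢ` where `m` is homogeneous of
multidegree `b`, `xˢ` is a monomial in the variables of `Λ` and `b - s = a`. -/
noncomputable def locPiece (Λ : Finset (Fin n)) (a : Fin n → ℤ) :
    AddSubgroup (LocM k n M Λ) :=
  AddSubgroup.closure
    {y | ∃ (m : M) (b : Fin n → ℤ) (s : Fin n →₀ ℕ)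
        (hs : (monomial s (1 : k) : MvPolynomial (Fin n) k) ∈ varSubmonoid k n Λ),
          m ∈ gr b ∧ (∀ i, b i - (s i : ℤ) = a i) ∧
            y = LocalizedModule.mk m ⟨monomial s (1 : k), hs⟩}

/-- The multidegree `a` component of the `j`-th term of the Čech complex of `M`. -/
noncomputable def cechPiece (j : ℕ) (a : Fin n → ℤ) : Set (CechTerm k n M j) :=
  {c | ∀ Λ, c Λ ∈ locPiece k n M gr Λ.1 a}

/-- The total degree `t` component of the `j`-th term of the Čech complex of `M`. -/
noncomputable def cechPieceTot (j : ℕ) (t : ℤ) : AddSubgroup (CechTerm k n M j) :=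
  ⨆ (a : Fin n → ℤ) (_ : (∑ i, a i) = t), AddSubgroup.closure (cechPiece k n M gr j a)

/-- `regLE k n M gr c` says that the Castelnuovo–Mumford regularity of the graded
module `M` (with respect to the total degree `ℤ`-grading) is at most `c`; by the
standard local cohomology characterization of regularity,
`reg M = max {i + t : Hⁱ_𝔪(M)_t ≠ 0}`, where `Hⁱ_𝔪(M)` is the cohomology of the
Čech complex of `M` on `x 1, …, x n`. -/
noncomputable def regLE (c : ℤ) : Prop :=
  ∀ (i : ℕ) (t : ℤ) (z : CechTerm k n M i),
    z ∈ LinearMap.ker (cechD k n M i) → z ∈ cechPieceTot k n M gr i t →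
      z ∉ cechB k n M i → (i : ℤ) + t ≤ c

end CechGraded

section Pieces

variable (k n)

/-- The set of homogeneous polynomials of multidegree `a ∈ ℤⁿ`
(empty if some `a i < 0`). -/
def RPieceSet (a : Fin n → ℤ) : Set (MvPolynomial (Fin n) k) :=
  {g | ∃ (c : k) (s : Fin n →₀ ℕ), (∀ i, (s i : ℤ) = a i) ∧ g = monomial s c}

/-- The multidegree `a` component of the polynomial ring, as a `k`-subspace. -/
noncomputable def RPiece (a : Fin n → ℤ) : Submodule k (MvPolynomial (Fin n) k) :=
  Submodule.span k (RPieceSet k n a)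

/-- A monomial ideal: an ideal generated by monomials. -/
def IsMonomialIdeal (I : Ideal (MvPolynomial (Fin n) k)) : Prop :=
  ∃ T : Set (Fin n →₀ ℕ), I = Ideal.span ((fun s => (monomial s (1 : k))) '' T)

/-- The multidegree `a` component of `R/I`: the image of the multidegree `a`
component of `R`. -/
def quotientGrSet (I : Ideal (MvPolynomial (Fin n) k)) (a : Fin n → ℤ) :
    Set (MvPolynomial (Fin n) k ⧸ I) :=
  (fun g => Submodule.Quotient.mk g) '' RPieceSet k n a

end Pieces

section Taylor

variable (k n)
variable {r : ℕ} (u : Fin r → (Fin n →₀ ℕ))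

/-- The exponent of the least common multiple of the monomials `x^(u l)`, `l ∈ S`. -/
noncomputable def lcmExp (S : Finset (Fin r)) : Fin n →₀ ℕ :=
  Finsupp.equivFunOnFinite.symm (fun i => S.sup (fun l => u l i))

/-- The `s`-th term of `Hom_R(T_•, ω_R)`, where `T_•` is the Taylor complex (a
`ℤⁿ`-graded free resolution of `R/I`) on the monomial generators `x^(u l)` of `I`:
as a module it is a direct sum of copies of `R` indexed by `s`-subsets of generators. -/
abbrev TaylorDual (s : ℕ) : Type :=
  ∀ _S : {S : Finset (Fin r) // S.card = s}, MvPolynomial (Fin n) k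

/-- The differential of `Hom_R(T_•, ω_R)`: the transpose of the Taylor complex
differential. -/
noncomputable def taylorD (s : ℕ) :
    TaylorDual k n (r := r) s →ₗ[MvPolynomial (Fin n) k] TaylorDual k n (r := r) (s + 1) :=
  LinearMap.pi fun S' : {S : Finset (Fin r) // S.card = s + 1} =>
    ∑ l ∈ S'.1.attach,
      (monomial (lcmExp n u S'.1 - lcmExp n u (S'.1.erase l.1))
          ((-1 : k) ^ ((S'.1.filter (fun x => x < l.1)).card))) •
        (LinearMap.proj (⟨S'.1.erase l.1, by
            rw [Finset.card_erase_of_mem l.2, S'.2]; rfl⟩ :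
              {S : Finset (Fin r) // S.card = s}))

/-- Cocycles of `Hom_R(T_•, ω_R)` in cohomological degree `i`. -/
noncomputable def extZ (i : ℕ) :
    Submodule (MvPolynomial (Fin n) k) (TaylorDual k n (r := r) i) :=
  LinearMap.ker (taylorD k n u i)

/-- Coboundaries of `Hom_R(T_•, ω_R)` in cohomological degree `i`. -/
noncomputable def extB :
    (i : ℕ) → Submodule (MvPolynomial (Fin n) k) (TaylorDual k n (r := r) i)
  | 0 => ⊥
  | (s + 1) => LinearMap.range (taylorD k n u s)

/-- `Ext^i_R(R/I, ω_R)`: the `i`-th cohomology of `Hom_R(T_•, ω_R)`, where `T_•` is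
the Taylor resolution of `R/I` on the monomial generators `x^(u l)` of `I` and
`ω_R = R(-(1,…,1))` is the canonical module. -/
noncomputable def ExtMod (i : ℕ) : Type :=
  extZ k n u i ⧸ (Submodule.comap (extZ k n u i).subtype (extB k n u i ⊓ extZ k n u i))

noncomputable instance (i : ℕ) : AddCommGroup (ExtMod k n u i) :=
  inferInstanceAs (AddCommGroup (extZ k n u i ⧸ _))

noncomputable instance (i : ℕ) : Module (MvPolynomial (Fin n) k) (ExtMod k n u i) :=
  inferInstanceAs (Module (MvPolynomial (Fin n) k) (extZ k n u i ⧸ _))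

noncomputable instance (i : ℕ) : Module k (ExtMod k n u i) :=
  inferInstanceAs (Module k (extZ k n u i ⧸ _))

noncomputable instance (i : ℕ) :
    IsScalarTower k (MvPolynomial (Fin n) k) (ExtMod k n u i) :=
  inferInstanceAs (IsScalarTower k (MvPolynomial (Fin n) k) (extZ k n u i ⧸ _))

/-- The multidegree `a` component of `Hom_R(T_s, ω_R) = ⊕_S Hom_R(R(-lcm_S), R(-(1,…,1)))`:
the component indexed by an `s`-subset `S` must be homogeneous of multidegree
`a + lcm_S - (1,…,1)` in `R`. -/
noncomputable def taylorPiece (s : ℕ) (a : Fin n → ℤ) :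
    Submodule k (TaylorDual k n (r := r) s) :=
  Submodule.pi Set.univ
    (fun S : {S : Finset (Fin r) // S.card = s} =>
      RPiece k n (fun i => a i + (lcmExp n u S.1 i : ℤ) - 1))

/-- The multidegree `a` component of `Ext^i_R(R/I, ω_R)`, i.e. of the `i`-th
cohomology of `Hom_R(T_•, ω_R)`: the image of the multidegree `a` cocycles. -/
noncomputable def extPiece (i : ℕ) (a : Fin n → ℤ) : Submodule k (ExtMod k n u i) :=
  Submodule.map
    ((Submodule.mkQ (Submodule.comap (extZ k n u i).subtype
        (extB k n u i ⊓ extZ k n u i))).restrictScalars k)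
    (Submodule.comap ((extZ k n u i).subtype.restrictScalars k) (taylorPiece k n u i a))

end Taylor

end Paper

/-!
Computed from the Taylor resolution, `Ext^i_R(R/I, ω_R)` is `ℤⁿ`-graded, and multiplication by
`x^m : Ext_a → Ext_{a+m}` is bijective whenever `a_l ≥ 1` on the support of `m`: on the cochain
level a homogeneous cochain of such a degree `a + m` is divisible by `x^m`, and the projections
onto homogeneous components commute with the differential.

Every `c ∈ ℤⁿ` is uniquely `c = (e_F - a) + u` with `supp a ∩ F = ∅` and `supp u ⊆ F` (namely
`F = {l | c_l ≥ 1}`), so `Ext_c = x^u · Ext_{e_F - a}`. Hence the vectors `x^u • m` with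
`m ∈ 𝓜_F` and `supp u ⊆ F` form a `k`-basis of `Ext`, and the Stanley spaces `k[F] m` are the
spans of the blocks of this basis.
-/

open MvPolynomial

section LinearIndependence

variable {R M T η : Type*} [Ring R] [AddCommGroup M] [Module R M]

theorem LinearIndependent.iSupIndep_span_image_fiber {v : T → M} (hv : LinearIndependent R v)
    (π : T → η) : iSupIndep fun j => Submodule.span R (v '' (π ⁻¹' {j})) := by
  intro j
  refine (hv.disjoint_span_image (disjoint_compl_right.preimage π)).mono_right ?_
  refine iSup₂_le fun i hij => Submodule.span_mono (Set.image_mono (Set.preimage_mono ?_))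
  simpa using Ne.symm hij

theorem iSupIndep.linearIndependent_of_linearIndepOn_fiber {E : η → Submodule R M}
    (hE : iSupIndep E) {v : T → M} (π : T → η) (hv : ∀ t, v t ∈ E (π t))
    (hfib : ∀ j, LinearIndepOn R v (π ⁻¹' {j})) : LinearIndependent R v := by
  have hspan : ∀ j, Submodule.span R (Set.range fun t : π ⁻¹' {j} => v t) ≤ E j := by
    intro j
    rw [Submodule.span_le]
    rintro _ ⟨⟨t, rfl⟩, rfl⟩
    exact hv t
  have hsigma := linearIndependent_iUnion_finite hfib fun j s _ hj =>
    (hE.disjoint_biSup hj).mono (hspan j) (iSup₂_mono fun i _ => hspan i)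
  exact (linearIndependent_equiv (Equiv.sigmaPreimageEquiv π)).1 hsigma

end LinearIndependence

theorem MvPolynomial.weightedHomogeneousComponent_monomial_mul {σ R M : Type*} [CommSemiring R]
    [AddCommGroup M] (w : σ → M) (m : M) (d : σ →₀ ℕ) (r : R) (p : MvPolynomial σ R) :
    weightedHomogeneousComponent w m (monomial d r * p) =
      monomial d r * weightedHomogeneousComponent w (m - Finsupp.weight w d) p := by
  classical
  ext t
  simp only [coeff_weightedHomogeneousComponent, coeff_monomial_mul']
  by_cases hdt : d ≤ t
  · have hw : Finsupp.weight w t = Finsupp.weight w (t - d) + Finsupp.weight w d := by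
      rw [← map_add, tsub_add_cancel_of_le hdt]
    simp only [hdt, if_true, hw, eq_sub_iff_add_eq]
    split_ifs <;> simp
  · simp [hdt]

namespace Paper

variable {k : Type} [Field k] {n : ℕ}

/-- `e_F - a ∈ ℤⁿ`, the multidegree of the elements of `𝓜_F`. -/
def indicatorSub (F : Finset (Fin n)) (a : Fin n → ℕ) : Fin n → ℤ :=
  fun l => (if l ∈ F then (1 : ℤ) else 0) - (a l : ℤ)

lemma weight_eZ_apply (m : Fin n →₀ ℕ) (l : Fin n) : Finsupp.weight (eZ n) m l = m l := by
  classical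
  rw [Finsupp.weight_apply, Finsupp.sum, Finset.sum_apply, Finset.sum_eq_single l]
  · simp [eZ]
  · intro i _ hil
    simp [eZ, Ne.symm hil]
  · simp [eZ]

lemma exists_indicatorSub_add_weight (c : Fin n → ℤ) :
    ∃ (F : Finset (Fin n)) (a : Fin n → ℕ) (u : Fin n →₀ ℕ), (∀ l ∈ F, a l = 0) ∧
      ↑u.support ⊆ (F : Set (Fin n)) ∧ indicatorSub F a + Finsupp.weight (eZ n) u = c := by
  classical
  refine ⟨Finset.univ.filter fun l => 1 ≤ c l, fun l => (-c l).toNat,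
    Finsupp.equivFunOnFinite.symm fun l => (c l - 1).toNat, ?_, ?_, ?_⟩
  · intro l hl
    simp only [Finset.mem_filter, Finset.mem_univ, true_and] at hl ⊢
    omega
  · intro l hl
    simp only [Finset.mem_coe, Finsupp.mem_support_iff, Finsupp.coe_equivFunOnFinite_symm] at hl
    simp only [Finset.coe_filter, Finset.mem_univ, true_and, Set.mem_ofPred_eq]
    omega
  · funext l
    simp only [Pi.add_apply, weight_eZ_apply, indicatorSub, Finsupp.coe_equivFunOnFinite_symm,
      Finset.mem_filter, Finset.mem_univ, true_and]
    split_ifs <;> omega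

lemma indicatorSub_add_weight_inj {F F' : Finset (Fin n)} {a a' : Fin n → ℕ} {u u' : Fin n →₀ ℕ}
    (ha : ∀ l ∈ F, a l = 0) (ha' : ∀ l ∈ F', a' l = 0)
    (hu : ↑u.support ⊆ (F : Set (Fin n))) (hu' : ↑u'.support ⊆ (F' : Set (Fin n)))
    (h : indicatorSub F a + Finsupp.weight (eZ n) u =
      indicatorSub F' a' + Finsupp.weight (eZ n) u') :
    F = F' ∧ u = u' := by
  have key : ∀ l, (l ∈ F ↔ l ∈ F') ∧ u l = u' l := by
    intro l
    have hl := congrFun h l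
    simp only [Pi.add_apply, weight_eZ_apply, indicatorSub] at hl
    have hu0 : l ∉ F → u l = 0 := fun hlF => Finsupp.notMem_support_iff.1 fun hs => hlF (hu hs)
    have hu0' : l ∉ F' → u' l = 0 := fun hlF => Finsupp.notMem_support_iff.1 fun hs => hlF (hu' hs)
    by_cases hF : l ∈ F <;> by_cases hF' : l ∈ F' <;>
      simp only [hF, hF', if_true, if_false, iff_self, true_and, true_iff, iff_true,
        false_and] at hl ⊢
    · have := ha l hF; have := ha' l hF'; omega
    · have := ha l hF; have := hu0' hF'; omega
    · have := ha' l hF'; have := hu0 hF; omega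
    · have := hu0 hF; have := hu0' hF'; omega
  exact ⟨Finset.ext fun l => (key l).1, Finsupp.ext fun l => (key l).2⟩

section OneDetermined

variable {M : Type} [AddCommGroup M] [Module (MvPolynomial (Fin n) k) M] [Module k M]

/-- The `ℤⁿ`-graded analogue of Miller's positive `1`-determinedness. -/
structure IsOneDetermined (E : (Fin n → ℤ) → Submodule k M) : Prop where
  monomial_smul_mem (m : Fin n →₀ ℕ) {a : Fin n → ℤ} {y : M} :
    y ∈ E a → monomial m (1 : k) • y ∈ E (a + Finsupp.weight (eZ n) m)
  injOn_monomial_smul {m : Fin n →₀ ℕ} {a : Fin n → ℤ} :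
    (∀ l ∈ m.support, 1 ≤ a l) → Set.InjOn (monomial m (1 : k) • · : M → M) (E a)
  exists_monomial_smul_eq {m : Fin n →₀ ℕ} {a : Fin n → ℤ} {y : M} :
    (∀ l ∈ m.support, 1 ≤ a l) → y ∈ E (a + Finsupp.weight (eZ n) m) →
      ∃ x ∈ E a, monomial m (1 : k) • x = y

lemma one_le_indicatorSub {F : Finset (Fin n)} {a : Fin n → ℕ} (ha : ∀ l ∈ F, a l = 0)
    {u : Fin n →₀ ℕ} (hu : ↑u.support ⊆ (F : Set (Fin n))) :
    ∀ l ∈ u.support, 1 ≤ indicatorSub F a l := by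
  intro l hl
  have hlF : l ∈ F := hu hl
  simp [indicatorSub, hlF, ha l hlF]

variable {E : (Fin n → ℤ) → Submodule k M}

lemma IsOneDetermined.isStanleySpace (hE : IsOneDetermined E) {F : Finset (Fin n)}
    {a : Fin n → ℕ} (ha : ∀ l ∈ F, a l = 0) {m : M} (hm : m ∈ E (indicatorSub F a)) (hm0 : m ≠ 0) :
    IsStanleySpace k n M m {l | l ∈ F} := fun _ hu h0 =>
  hm0 <| hE.injOn_monomial_smul (one_le_indicatorSub ha hu) hm (zero_mem _)
    (h0.trans (smul_zero _).symm)

variable {ι : Finset (Fin n) → Type}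

variable (ι) in
abbrev StanleyIndex : Type :=
  {p : ((F : Finset (Fin n)) × ι F) × (Fin n →₀ ℕ) // ↑p.2.support ⊆ (p.1.1 : Set (Fin n))}

variable (k) in
noncomputable def stanleyFamily (b : ∀ F, ι F → M) (p : StanleyIndex ι) : M :=
  monomial p.1.2 (1 : k) • b p.1.1.1 p.1.1.2

lemma stanleySpan_eq_span_stanleyFamily (b : ∀ F, ι F → M) (z : (F : Finset (Fin n)) × ι F) :
    stanleySpan k n M (b z.1 z.2) {l | l ∈ z.1} =
      Submodule.span k (stanleyFamily k b '' {p | p.1.1 = z}) := by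
  rw [stanleySpan]
  congr 1
  ext y
  constructor
  · rintro ⟨u, hu, rfl⟩
    exact ⟨⟨(z, u), hu⟩, rfl, rfl⟩
  · rintro ⟨⟨⟨z', u⟩, hu⟩, rfl, rfl⟩
    exact ⟨u, hu, rfl⟩

/-- In each multidegree `c` only one pair `(F, u)` occurs, and `x^u` is injective on the piece
`E (c - u)` containing the corresponding `b F x`. -/
lemma IsOneDetermined.linearIndependent_stanleyFamily
    [IsScalarTower k (MvPolynomial (Fin n) k) M] (hE : IsOneDetermined E)
    (hindep : iSupIndep E) {b : ∀ F, ι F → M}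
    (hhom : ∀ F x, ∃ a : Fin n → ℕ, (∀ l ∈ F, a l = 0) ∧ b F x ∈ E (indicatorSub F a))
    (hli : ∀ F, LinearIndependent k (b F)) :
    LinearIndependent k (stanleyFamily k b) := by
  choose A hA hAE using hhom
  let deg : StanleyIndex ι → Fin n → ℤ := fun p =>
    indicatorSub p.1.1.1 (A _ p.1.1.2) + Finsupp.weight (eZ n) p.1.2
  refine hindep.linearIndependent_of_linearIndepOn_fiber deg
    (fun p => hE.monomial_smul_mem _ (hAE _ _)) fun c => ?_
  obtain ⟨F, a, u, ha, hu, rfl⟩ := exists_indicatorSub_add_weight c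
  have hfib : ∀ p ∈ deg ⁻¹' {indicatorSub F a + Finsupp.weight (eZ n) u},
      p.1.1.1 = F ∧ p.1.2 = u := fun p hp =>
    indicatorSub_add_weight_inj (hA _ _) ha p.2 hu hp
  have hdeg : ∀ p ∈ deg ⁻¹' {indicatorSub F a + Finsupp.weight (eZ n) u},
      b p.1.1.1 p.1.1.2 ∈ E (indicatorSub F a) := fun p hp => by
    have h : deg p = _ := hp
    simp only [deg, (hfib p hp).2] at h
    rw [← add_right_cancel h]
    exact hAE _ _
  let f := DistribSMul.toLinearMap k M (monomial u (1 : k))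
  refine LinearIndepOn.congr (v := (f ∘ fun z => b z.1 z.2) ∘ fun p => p.1.1) ?_
    fun p hp => by simp [f, stanleyFamily, (hfib p hp).2]
  refine LinearIndepOn.comp_of_image (LinearIndepOn.map_injOn ?_ f ?_) ?_
  · refine ((linearIndepOn_range_iff sigma_mk_injective fun z => b z.1 z.2).2 (hli F)).mono ?_
    rintro _ ⟨⟨⟨⟨F', x⟩, u'⟩, hu'⟩, hp, rfl⟩
    obtain rfl : F' = F := (hfib _ hp).1
    exact ⟨x, rfl⟩
  · refine (hE.injOn_monomial_smul (one_le_indicatorSub ha hu)).mono (Submodule.span_le.2 ?_)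
    rintro _ ⟨_, ⟨p, hp, rfl⟩, rfl⟩
    exact hdeg p hp
  · exact fun p hp q hq h => Subtype.ext (Prod.ext h ((hfib p hp).2.trans (hfib q hq).2.symm))

lemma IsOneDetermined.iSup_stanleySpan_eq_top [IsScalarTower k (MvPolynomial (Fin n) k) M]
    (hE : IsOneDetermined E) (htop : ⨆ a, E a = ⊤)
    {b : ∀ F, ι F → M}
    (hspan : ∀ F (a : Fin n → ℕ), (∀ l ∈ F, a l = 0) →
      E (indicatorSub F a) ≤ Submodule.span k (Set.range (b F))) :
    ⨆ z : (F : Finset (Fin n)) × ι F, stanleySpan k n M (b z.1 z.2) {l | l ∈ z.1} = ⊤ := by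
  rw [eq_top_iff, ← htop]
  refine iSup_le fun c => ?_
  obtain ⟨F, a, u, ha, hu, rfl⟩ := exists_indicatorSub_add_weight c
  intro y hy
  obtain ⟨x, hx, rfl⟩ := hE.exists_monomial_smul_eq (one_le_indicatorSub ha hu) hy
  have hle : Submodule.span k (Set.range (b F)) ≤ (⨆ z : (F : Finset (Fin n)) × ι F,
      stanleySpan k n M (b z.1 z.2) {l | l ∈ z.1}).comap
        (DistribSMul.toLinearMap k M (monomial u (1 : k))) := by
    rw [Submodule.span_le]
    rintro _ ⟨x', rfl⟩
    exact Submodule.mem_iSup_of_mem ⟨F, x'⟩ (Submodule.subset_span ⟨u, hu, rfl⟩)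
  exact hle (hspan F a ha hx)

theorem IsOneDetermined.stanley_decomposition [IsScalarTower k (MvPolynomial (Fin n) k) M]
    (hE : IsOneDetermined E)
    (hgr : DirectSum.IsInternal E) [DecidableEq ((F : Finset (Fin n)) × ι F)]
    (b : ∀ F, ι F → M)
    (hhom : ∀ F x, ∃ a : Fin n → ℕ, (∀ l ∈ F, a l = 0) ∧ b F x ∈ E (indicatorSub F a))
    (hli : ∀ F, LinearIndependent k (b F))
    (hspan : ∀ F (a : Fin n → ℕ), (∀ l ∈ F, a l = 0) →
      E (indicatorSub F a) ≤ Submodule.span k (Set.range (b F))) :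
    (∀ z : (F : Finset (Fin n)) × ι F, IsStanleySpace k n M (b z.1 z.2) {l | l ∈ z.1}) ∧
      DirectSum.IsInternal fun z : (F : Finset (Fin n)) × ι F =>
        stanleySpan k n M (b z.1 z.2) {l | l ∈ z.1} := by
  refine ⟨fun z => ?_, ?_⟩
  · obtain ⟨a, ha, hb⟩ := hhom z.1 z.2
    exact hE.isStanleySpace ha hb ((hli z.1).ne_zero z.2)
  rw [DirectSum.isInternal_submodule_iff_iSupIndep_and_iSup_eq_top]
  refine ⟨?_, hE.iSup_stanleySpan_eq_top hgr.submodule_iSup_eq_top hspan⟩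
  simp only [stanleySpan_eq_span_stanleyFamily]
  exact (hE.linearIndependent_stanleyFamily hgr.submodule_iSupIndep hhom hli)
    |>.iSupIndep_span_image_fiber fun p => p.1.1

end OneDetermined

lemma RPiece_eq_weightedHomogeneousSubmodule (b : Fin n → ℤ) :
    RPiece k n b = weightedHomogeneousSubmodule k (eZ n) b := by
  apply le_antisymm
  · rw [RPiece, Submodule.span_le]
    rintro _ ⟨c, s, hs, rfl⟩
    exact isWeightedHomogeneous_monomial _ _ _ (funext fun i => by rw [weight_eZ_apply, hs])
  · intro p hp
    rw [← support_sum_monomial_coeff p]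
    refine Submodule.sum_mem _ fun s hs => Submodule.subset_span ⟨coeff s p, s, fun i => ?_, rfl⟩
    rw [← weight_eZ_apply, hp (mem_support_iff.1 hs)]

lemma monomial_dvd_of_isWeightedHomogeneous {p : MvPolynomial (Fin n) k} {b : Fin n → ℤ}
    (hp : IsWeightedHomogeneous (eZ n) p b) {m : Fin n →₀ ℕ}
    (hm : ∀ i ∈ m.support, (m i : ℤ) ≤ b i) : monomial m (1 : k) ∣ p := by
  rw [← support_sum_monomial_coeff p]
  refine Finset.dvd_sum fun t ht => monomial_dvd_monomial.2 ⟨Or.inr fun i => ?_, one_dvd _⟩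
  by_cases hi : i ∈ m.support
  · have := hm i hi
    rw [← hp (mem_support_iff.1 ht), weight_eZ_apply] at this
    exact_mod_cast this
  · simp [Finsupp.notMem_support_iff.1 hi]

section Taylor

variable {r : ℕ} (u : Fin r → (Fin n →₀ ℕ))

/-- The multidegree in `R` of the `S`-component of a cochain of multidegree `a`. -/
noncomputable def taylorDeg (S : Finset (Fin r)) (a : Fin n → ℤ) : Fin n → ℤ :=
  fun i => a i + (lcmExp n u S i : ℤ) - 1

lemma mem_taylorPiece_iff {s : ℕ} {a : Fin n → ℤ} {c : TaylorDual k n (r := r) s} :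
    c ∈ taylorPiece k n u s a ↔
      ∀ S, IsWeightedHomogeneous (eZ n) (c S) (taylorDeg u S.1 a) := by
  simp only [taylorPiece, Submodule.mem_pi, Set.mem_univ, true_implies,
    RPiece_eq_weightedHomogeneousSubmodule, mem_weightedHomogeneousSubmodule]
  rfl

lemma taylorDeg_injective (S : Finset (Fin r)) : Function.Injective (taylorDeg u S) :=
  fun a a' h => funext fun i => by simpa [taylorDeg] using congrFun h i

lemma taylorDeg_sub_weight_lcmExp {S S' : Finset (Fin r)} (h : S ⊆ S') (a : Fin n → ℤ) :
    taylorDeg u S' a - Finsupp.weight (eZ n) (lcmExp n u S' - lcmExp n u S) = taylorDeg u S a := by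
  funext i
  have hle : lcmExp n u S i ≤ lcmExp n u S' i := Finset.sup_mono h
  simp only [taylorDeg, Pi.sub_apply, weight_eZ_apply, Finsupp.tsub_apply, Nat.cast_sub hle]
  ring

lemma taylorDeg_add_weight (S : Finset (Fin r)) (a : Fin n → ℤ) (m : Fin n →₀ ℕ) :
    taylorDeg u S (a + Finsupp.weight (eZ n) m) = taylorDeg u S a + Finsupp.weight (eZ n) m := by
  funext i
  simp only [taylorDeg, Pi.add_apply]
  ring

lemma taylorD_apply {s : ℕ} (c : TaylorDual k n (r := r) s)
    (S' : {S : Finset (Fin r) // S.card = s + 1}) :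
    taylorD k n u s c S' = ∑ l ∈ S'.1.attach,
      monomial (lcmExp n u S'.1 - lcmExp n u (S'.1.erase l.1))
          ((-1 : k) ^ ((S'.1.filter (fun x => x < l.1)).card)) *
        c ⟨S'.1.erase l.1, by rw [Finset.card_erase_of_mem l.2, S'.2]; rfl⟩ := by
  simp [taylorD, LinearMap.sum_apply, smul_eq_mul]

noncomputable def taylorProj (s : ℕ) (a : Fin n → ℤ) :
    TaylorDual k n (r := r) s →ₗ[k] TaylorDual k n (r := r) s :=
  LinearMap.pi fun S => weightedHomogeneousComponent (eZ n) (taylorDeg u S.1 a) ∘ₗ LinearMap.proj S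

@[simp] lemma taylorProj_apply {s : ℕ} (a : Fin n → ℤ) (c : TaylorDual k n (r := r) s)
    (S : {S : Finset (Fin r) // S.card = s}) :
    taylorProj u s a c S = weightedHomogeneousComponent (eZ n) (taylorDeg u S.1 a) (c S) := rfl

lemma taylorProj_mem {s : ℕ} (a : Fin n → ℤ) (c : TaylorDual k n (r := r) s) :
    taylorProj u s a c ∈ taylorPiece k n u s a :=
  (mem_taylorPiece_iff u).2 fun _ => weightedHomogeneousComponent_isWeightedHomogeneous _ _

lemma taylorProj_eq_self {s : ℕ} {a : Fin n → ℤ} {c : TaylorDual k n (r := r) s}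
    (hc : c ∈ taylorPiece k n u s a) : taylorProj u s a c = c :=
  funext fun S => weightedHomogeneousComponent_eq_self ((mem_taylorPiece_iff u).1 hc S)

lemma taylorProj_eq_zero {s : ℕ} {a a' : Fin n → ℤ} {c : TaylorDual k n (r := r) s}
    (hc : c ∈ taylorPiece k n u s a') (h : a ≠ a') : taylorProj u s a c = 0 :=
  funext fun S => ((mem_taylorPiece_iff u).1 hc S).weightedHomogeneousComponent_ne _
    ((taylorDeg_injective u S.1).ne h)

lemma taylorD_taylorProj (s : ℕ) (a : Fin n → ℤ) (c : TaylorDual k n (r := r) s) :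
    taylorD k n u s (taylorProj u s a c) = taylorProj u (s + 1) a (taylorD k n u s c) := by
  funext S'
  simp only [taylorProj_apply, taylorD_apply, map_sum, weightedHomogeneousComponent_monomial_mul]
  refine Finset.sum_congr rfl fun l _ => ?_
  rw [taylorDeg_sub_weight_lcmExp u (Finset.erase_subset _ _)]

lemma monomial_smul_taylorProj {s : ℕ} (a : Fin n → ℤ) (m : Fin n →₀ ℕ)
    (c : TaylorDual k n (r := r) s) :
    monomial m (1 : k) • taylorProj u s a c =
      taylorProj u s (a + Finsupp.weight (eZ n) m) (monomial m (1 : k) • c) := by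
  funext S
  simp only [taylorProj_apply, Pi.smul_apply, smul_eq_mul,
    weightedHomogeneousComponent_monomial_mul, taylorDeg_add_weight, add_sub_cancel_right]

lemma monomial_smul_mem_taylorPiece {s : ℕ} {a : Fin n → ℤ} (m : Fin n →₀ ℕ)
    {c : TaylorDual k n (r := r) s} (hc : c ∈ taylorPiece k n u s a) :
    monomial m (1 : k) • c ∈ taylorPiece k n u s (a + Finsupp.weight (eZ n) m) := by
  rw [← taylorProj_eq_self u hc, monomial_smul_taylorProj]
  exact taylorProj_mem u _ _

lemma monomial_smul_injective (s : ℕ) (m : Fin n →₀ ℕ) :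
    Function.Injective (monomial m (1 : k) • · : TaylorDual k n (r := r) s → _) :=
  smul_right_injective _ (by simp)

lemma exists_monomial_smul_eq_of_mem_taylorPiece {s : ℕ} {a : Fin n → ℤ} {m : Fin n →₀ ℕ}
    (ha : ∀ l ∈ m.support, 1 ≤ a l) {c : TaylorDual k n (r := r) s}
    (hc : c ∈ taylorPiece k n u s (a + Finsupp.weight (eZ n) m)) :
    ∃ w ∈ taylorPiece k n u s a, monomial m (1 : k) • w = c := by
  -- every exponent of `c S` is `a + m + lcm_S - 1`, which is `≥ m` on the support of `m`
  have hdvd : ∀ S, monomial m (1 : k) ∣ c S := fun S =>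
    monomial_dvd_of_isWeightedHomogeneous ((mem_taylorPiece_iff u).1 hc S) fun i hi => by
      have := ha i hi
      simp only [taylorDeg, Pi.add_apply, weight_eZ_apply]
      omega
  choose q hq using hdvd
  refine ⟨taylorProj u s a q, taylorProj_mem u a q, ?_⟩
  rw [monomial_smul_taylorProj, ← taylorProj_eq_self u hc]
  exact congrArg _ (funext fun S => (hq S).symm)

lemma single_monomial_mem_taylorPiece {s : ℕ} (S : {S : Finset (Fin r) // S.card = s})
    (t : Fin n →₀ ℕ) (x : k) :
    Pi.single S (monomial t x) ∈ taylorPiece k n u s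
      (Finsupp.weight (eZ n) t - Finsupp.weight (eZ n) (lcmExp n u S.1) + 1) := by
  refine (mem_taylorPiece_iff u).2 fun S' => ?_
  by_cases hS : S' = S
  · subst hS
    rw [Pi.single_eq_same]
    refine isWeightedHomogeneous_monomial _ _ _ ?_
    ext i
    simp only [taylorDeg, Pi.add_apply, Pi.sub_apply, Pi.one_apply, weight_eZ_apply]
    ring
  · rw [Pi.single_eq_of_ne hS]
    exact isWeightedHomogeneous_zero _ _ _

lemma exists_sum_taylorProj_eq {s : ℕ} (c : TaylorDual k n (r := r) s) :
    ∃ D : Finset (Fin n → ℤ), ∑ a ∈ D, taylorProj u s a c = c := by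
  classical
  have hc : c ∈ ⨆ a, taylorPiece k n u s a := by
    rw [← Finset.univ_sum_single c]
    refine Submodule.sum_mem _ fun S _ => ?_
    rw [← support_sum_monomial_coeff (c S), ← AddMonoidHom.single_apply, map_sum]
    exact Submodule.sum_mem _ fun t _ =>
      Submodule.mem_iSup_of_mem _ (single_monomial_mem_taylorPiece u S t _)
  obtain ⟨f, hf, rfl⟩ := (Submodule.mem_iSup_iff_exists_finsupp _ c).1 hc
  refine ⟨f.support, Finset.sum_congr rfl fun a _ => ?_⟩
  rw [Finsupp.sum, map_sum, Finset.sum_eq_single a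
    (fun b _ hb => taylorProj_eq_zero u (hf b) (Ne.symm hb))
    (fun ha => by rw [Finsupp.notMem_support_iff.1 ha, map_zero]),
    taylorProj_eq_self u (hf a)]

lemma taylorProj_mem_extZ {i : ℕ} (a : Fin n → ℤ) {z : TaylorDual k n (r := r) i}
    (hz : z ∈ extZ k n u i) : taylorProj u i a z ∈ extZ k n u i := by
  rw [extZ, LinearMap.mem_ker] at hz ⊢
  rw [taylorD_taylorProj, hz, map_zero]

lemma taylorProj_mem_extB {i : ℕ} (a : Fin n → ℤ) {z : TaylorDual k n (r := r) i}
    (hz : z ∈ extB k n u i) : taylorProj u i a z ∈ extB k n u i := by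
  cases i with
  | zero =>
    obtain rfl : z = 0 := hz
    rw [map_zero]
    exact zero_mem _
  | succ s =>
    obtain ⟨c, rfl⟩ := hz
    exact ⟨taylorProj u s a c, taylorD_taylorProj u s a c⟩

lemma mem_extZ_of_monomial_smul {i : ℕ} (m : Fin n →₀ ℕ) {w : TaylorDual k n (r := r) i}
    (hw : monomial m (1 : k) • w ∈ extZ k n u i) : w ∈ extZ k n u i := by
  rw [extZ, LinearMap.mem_ker, map_smul] at hw
  rw [extZ, LinearMap.mem_ker]
  exact monomial_smul_injective _ m (hw.trans (smul_zero _).symm)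

/-- The primitive of `x^m • w` may be taken homogeneous of multidegree `a + m`, hence divisible
by `x^m`. -/
lemma mem_extB_of_monomial_smul {i : ℕ} {a : Fin n → ℤ} {m : Fin n →₀ ℕ}
    (ha : ∀ l ∈ m.support, 1 ≤ a l) {w : TaylorDual k n (r := r) i}
    (hw : w ∈ taylorPiece k n u i a) (hB : monomial m (1 : k) • w ∈ extB k n u i) :
    w ∈ extB k n u i := by
  cases i with
  | zero =>
    exact monomial_smul_injective _ m (hB.trans (smul_zero _).symm)
  | succ s =>
    obtain ⟨c, hc⟩ := hB
    obtain ⟨v, -, hv⟩ := exists_monomial_smul_eq_of_mem_taylorPiece u ha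
      (taylorProj_mem u (a + Finsupp.weight (eZ n) m) c)
    refine ⟨v, monomial_smul_injective _ m ?_⟩
    simp only [← map_smul, hv, taylorD_taylorProj, hc]
    exact taylorProj_eq_self u (monomial_smul_mem_taylorPiece u m hw)

variable (k) in
noncomputable def extMk (i : ℕ) : extZ k n u i →ₗ[MvPolynomial (Fin n) k] ExtMod k n u i :=
  Submodule.mkQ _

lemma extMk_surjective (i : ℕ) : Function.Surjective (extMk k u i) :=
  Submodule.mkQ_surjective _

lemma extMk_eq_zero_iff {i : ℕ} {z : extZ k n u i} :
    extMk k u i z = 0 ↔ (z : TaylorDual k n (r := r) i) ∈ extB k n u i := by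
  change (Submodule.Quotient.mk z : extZ k n u i ⧸ _) = 0 ↔ _
  rw [Submodule.Quotient.mk_eq_zero, Submodule.mem_comap,
    Submodule.subtype_apply, Submodule.mem_inf, and_iff_left z.2]

lemma mem_extPiece_iff {i : ℕ} {a : Fin n → ℤ} {y : ExtMod k n u i} :
    y ∈ extPiece k n u i a ↔
      ∃ z : extZ k n u i, (z : TaylorDual k n (r := r) i) ∈ taylorPiece k n u i a ∧
        extMk k u i z = y :=
  Iff.rfl

lemma isOneDetermined_extPiece (i : ℕ) : IsOneDetermined (extPiece k n u i) where
  monomial_smul_mem m {a y} hy := by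
    obtain ⟨z, hz, rfl⟩ := (mem_extPiece_iff u).1 hy
    exact (mem_extPiece_iff u).2
      ⟨monomial m (1 : k) • z, monomial_smul_mem_taylorPiece u m hz, map_smul (extMk k u i) _ _⟩
  injOn_monomial_smul {m a} ha y₁ hy₁ y₂ hy₂ h := by
    rw [← sub_eq_zero]
    obtain ⟨z, hz, hzy⟩ := (mem_extPiece_iff u).1 (sub_mem hy₁ hy₂)
    have h0 : extMk k u i (monomial m (1 : k) • z) = 0 := by
      rw [map_smul, hzy, smul_sub, sub_eq_zero]
      exact h
    rw [← hzy, extMk_eq_zero_iff]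
    exact mem_extB_of_monomial_smul u ha hz ((extMk_eq_zero_iff u).1 h0)
  exists_monomial_smul_eq {m a y} ha hy := by
    obtain ⟨z, hz, rfl⟩ := (mem_extPiece_iff u).1 hy
    obtain ⟨w, hw, hwz⟩ := exists_monomial_smul_eq_of_mem_taylorPiece u ha hz
    have hwZ : w ∈ extZ k n u i := mem_extZ_of_monomial_smul u m (hwz ▸ z.2)
    refine ⟨extMk k u i ⟨w, hwZ⟩, ⟨⟨w, hwZ⟩, hw, rfl⟩, ?_⟩
    rw [← map_smul]
    exact congrArg _ (Subtype.ext hwz)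

lemma iSup_extPiece_eq_top (i : ℕ) : ⨆ a, extPiece k n u i a = ⊤ := by
  refine eq_top_iff.2 fun y _ => ?_
  obtain ⟨z, rfl⟩ := extMk_surjective u i y
  obtain ⟨D, hD⟩ := exists_sum_taylorProj_eq u (z : TaylorDual k n (r := r) i)
  have hz : z = ∑ a ∈ D, ⟨taylorProj u i a z, taylorProj_mem_extZ u a z.2⟩ :=
    Subtype.ext (by rw [Submodule.coe_sum, hD])
  rw [hz, map_sum]
  exact Submodule.sum_mem _ fun a _ =>
    Submodule.mem_iSup_of_mem a ⟨_, taylorProj_mem u a _, rfl⟩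

lemma iSupIndep_extPiece (i : ℕ) : iSupIndep (extPiece k n u i) := by
  classical
  rw [iSupIndep_iff_finsetSum_eq_zero_imp_eq_zero]
  intro D y hy hsum a ha
  choose! z hzC hzy using fun a ha => (mem_extPiece_iff u).1 (hy a ha)
  have hB : ∑ b ∈ D, (z b : TaylorDual k n (r := r) i) ∈ extB k n u i := by
    rw [← Submodule.coe_sum, ← extMk_eq_zero_iff, map_sum, ← hsum]
    exact Finset.sum_congr rfl hzy
  have hproj := taylorProj_mem_extB u a hB
  rw [map_sum, Finset.sum_eq_single a (fun b hb hba => taylorProj_eq_zero u (hzC b hb) hba.symm)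
    (absurd ha), taylorProj_eq_self u (hzC a ha)] at hproj
  rw [← hzy a ha, extMk_eq_zero_iff]
  exact hproj

lemma isInternal_extPiece (i : ℕ) : DirectSum.IsInternal (extPiece k n u i) :=
  (DirectSum.isInternal_submodule_iff_iSupIndep_and_iSup_eq_top _).2
    ⟨iSupIndep_extPiece u i, iSup_extPiece_eq_top u i⟩

end Taylor

end Paper

set_option synthInstance.maxHeartbeats 1000000 in
set_option maxHeartbeats 1000000 in
open MvPolynomial Paper in
theorem stmt_12_general {k : Type} [Field k] {n : ℕ}
    {r : ℕ} (u : Fin r → (Fin n →₀ ℕ))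
    (i : ℕ)
    -- for each `F ⊆ [n]`, `b F : ι F → Ext^i_R(R/I, ω_R)` is a multigraded `k`-basis
    -- `𝓜^i_F` of `⊕_{a ∈ ℕⁿ, supp a ∩ F = ∅} Ext^i_R(R/I, ω_R)_{e_F - a}` (where
    -- `ExtMod k n u i` is `Ext^i_R(R/I, ω_R)`, computed from the Taylor resolution
    -- of `R/I` on the generators `x^(u l)`, with natural `ℤⁿ`-grading `extPiece`):
    (ι : Finset (Fin n) → Type)
    [DecidableEq ((F : Finset (Fin n)) × ι F)]
    (b : ∀ F : Finset (Fin n), ι F → ExtMod k n u i)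
    (hhom : ∀ (F : Finset (Fin n)) (x : ι F), ∃ a : Fin n → ℕ,
      (∀ l ∈ F, a l = 0) ∧
        b F x ∈ extPiece k n u i (fun l => (if l ∈ F then (1 : ℤ) else 0) - (a l : ℤ)))
    (hbasis : ∀ F : Finset (Fin n),
      LinearIndependent k (b F) ∧
        Submodule.span k (Set.range (b F)) =
          ⨆ (a : Fin n → ℕ) (_ : ∀ l ∈ F, a l = 0),
            extPiece k n u i (fun l => (if l ∈ F then (1 : ℤ) else 0) - (a l : ℤ))) :
    -- Then `S_i = {(m, F) : F ⊆ [n], m ∈ 𝓜^i_F}` is a Stanley decomposition of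
    -- `Ext^i_R(R/I, ω_R)`: each `k[{x_l : l ∈ F}] m` is a Stanley space …
    (∀ z : (F : Finset (Fin n)) × ι F,
        IsStanleySpace k n (ExtMod k n u i) (b z.1 z.2) {l | l ∈ z.1}) ∧
      -- … and `Ext^i_R(R/I, ω_R)` is their direct sum as a `k`-vector space:
      DirectSum.IsInternal (fun z : (F : Finset (Fin n)) × ι F =>
        stanleySpan k n (ExtMod k n u i) (b z.1 z.2) {l | l ∈ z.1}) :=
  (isOneDetermined_extPiece u i).stanley_decomposition (isInternal_extPiece u i) b hhom
    (fun F => (hbasis F).1) fun F a ha => (hbasis F).2 ▸ le_iSup₂_of_le a ha le_rfl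

set_option synthInstance.maxHeartbeats 1000000 in
set_option maxHeartbeats 1000000 in
open MvPolynomial Paper in
theorem stmt_12 {k : Type} [Field k] {n : ℕ}
    (I : Ideal (MvPolynomial (Fin n) k)) {r : ℕ} (u : Fin r → (Fin n →₀ ℕ))
    -- `I` is the monomial ideal generated by the monomials `x^(u l)`:
    (hu : I = Ideal.span {g : MvPolynomial (Fin n) k | ∃ l, g = monomial (u l) (1 : k)})
    (i : ℕ)
    -- for each `F ⊆ [n]`, `b F : ι F → Ext^i_R(R/I, ω_R)` is a multigraded `k`-basis
    -- `𝓜^i_F` of `⊕_{a ∈ ℕⁿ, supp a ∩ F = ∅} Ext^i_R(R/I, ω_R)_{e_F - a}` (where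
    -- `ExtMod k n u i` is `Ext^i_R(R/I, ω_R)`, computed from the Taylor resolution
    -- of `R/I` on the generators `x^(u l)`, with natural `ℤⁿ`-grading `extPiece`):
    (ι : Finset (Fin n) → Type) [∀ F, Fintype (ι F)]
    [DecidableEq ((F : Finset (Fin n)) × ι F)]
    (b : ∀ F : Finset (Fin n), ι F → ExtMod k n u i)
    (hhom : ∀ (F : Finset (Fin n)) (x : ι F), ∃ a : Fin n → ℕ,
      (∀ l ∈ F, a l = 0) ∧
        b F x ∈ extPiece k n u i (fun l => (if l ∈ F then (1 : ℤ) else 0) - (a l : ℤ)))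
    (hbasis : ∀ F : Finset (Fin n),
      LinearIndependent k (b F) ∧
        Submodule.span k (Set.range (b F)) =
          ⨆ (a : Fin n → ℕ) (_ : ∀ l ∈ F, a l = 0),
            extPiece k n u i (fun l => (if l ∈ F then (1 : ℤ) else 0) - (a l : ℤ))) :
    -- Then `S_i = {(m, F) : F ⊆ [n], m ∈ 𝓜^i_F}` is a Stanley decomposition of
    -- `Ext^i_R(R/I, ω_R)`: each `k[{x_l : l ∈ F}] m` is a Stanley space …
    (∀ z : (F : Finset (Fin n)) × ι F,
        IsStanleySpace k n (ExtMod k n u i) (b z.1 z.2) {l | l ∈ z.1}) ∧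
      -- … and `Ext^i_R(R/I, ω_R)` is their direct sum as a `k`-vector space:
      DirectSum.IsInternal (fun z : (F : Finset (Fin n)) × ι F =>
        stanleySpan k n (ExtMod k n u i) (b z.1 z.2) {l | l ∈ z.1}) :=
  stmt_12_general u i ι b hhom hbasis
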